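/- For every probability weight p = (p₁, p₂) and every i with 1 ≤ i ≤ m, the self-similar measure satisfies μ_p([0, d_i]) = 1 − p₂^{m+1−i} / (1 − p₁·p₂^{m−1}). -/

import Mathlib

open MeasureTheory

noncomputable section

/-- The contraction maps: `Smap β 0 = S₁ : x ↦ x/β` and `Smap β 1 = S₂ : x ↦ x/β + (1 - 1/β)`. -/
def Smap (β : ℝ) (i : Fin 2) (x : ℝ) : ℝ :=
  if i = 0 then x / β else x / β + (1 - 1 / β)

/-- `Sapply β I = S_I = S_{i₁} ∘ ⋯ ∘ S_{i_n}` for a word `I = i₁…i_n ∈ {1,2}^n`. -/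
def Sapply (β : ℝ) : {n : ℕ} → (Fin n → Fin 2) → ℝ → ℝ
  | 0, _, x => x
  | _+1, I, x => Smap β (I 0) (Sapply β (fun k => I k.succ) x)

/-- `Xn β n = {S_I(0) : I ∈ {1,2}^n} ∪ {1}`. -/
def Xn (β : ℝ) (n : ℕ) : Finset ℝ :=
  (Finset.univ.image fun I : Fin n → Fin 2 => Sapply β I 0) ∪ {1}

/-- `pt β n j = a_{n,j}`, the `j`-th element of `Xn β n` in increasing order
(junk value `0` if `j` is out of range). -/
def pt (β : ℝ) (n j : ℕ) : ℝ := ((Xn β n).sort (· ≤ ·)).getD j 0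

/-- The sequence `d₀ = 1`, `d₁ = β - 1`, `d_{j+1} = β·d_j - d₁`. -/
def dd (β : ℝ) : ℕ → ℝ
  | 0 => 1
  | 1 => β - 1
  | j+2 => β * dd β (j+1) - (β - 1)

/-- The weight of a letter: `pw p₁ p₂ i = p_{i+1}`. -/
def pw (p1 p2 : ℝ) (i : Fin 2) : ℝ := if i = 0 then p1 else p2

/-- `Wn β p₁ p₂ n x = W_n(x) = ∑_{S_I(0)=x, |I|=n} p_I`. -/
def Wn (β p1 p2 : ℝ) (n : ℕ) (x : ℝ) : ℝ :=
  ∑ I : Fin n → Fin 2, if Sapply β I 0 = x then ∏ k, pw p1 p2 (I k) else 0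

/-- A measure with support `[0,1]` is doubling if
`sup { μ(B(x,2r))/μ(B(x,r)) : x ∈ supp μ = [0,1], r > 0 } < ∞`. -/
def IsDoubling (μ : Measure ℝ) : Prop :=
  (⨆ (x : ℝ) (_ : x ∈ Set.Icc (0:ℝ) 1) (r : ℝ) (_ : 0 < r),
    μ (Metric.closedBall x (2 * r)) / μ (Metric.closedBall x r)) < ⊤

lemma dd_formula (β : ℝ) (j : ℕ) : dd β (j+1) = 1 - β^j * (2-β) := by
  induction j with
  | zero => simp [dd]; ring
  | succ n ih =>
    rw [show dd β (n+1+1) = β * dd β (n+1) - (β-1) from rfl, ih]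
    ring

lemma Smap0_eq (β : ℝ) : Smap β 0 = fun x => x / β := by
  funext x; simp [Smap]

lemma Smap1_eq (β : ℝ) (hb : (0:ℝ) < β) : Smap β 1 = fun x => (x + (β - 1)) / β := by
  funext x; simp only [Smap]
  norm_num
  field_simp

lemma pre0_Icc (β : ℝ) (hb : (0:ℝ) < β) (a b : ℝ) :
    (Smap β 0) ⁻¹' Set.Icc a b = Set.Icc (a*β) (b*β) := by
  rw [Smap0_eq]; ext x
  simp only [Set.mem_preimage, Set.mem_Icc, le_div_iff₀ hb, div_le_iff₀ hb]

lemma pre1_Icc (β : ℝ) (hb : (0:ℝ) < β) (a b : ℝ) :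
    (Smap β 1) ⁻¹' Set.Icc a b = Set.Icc (a*β - (β-1)) (b*β - (β-1)) := by
  rw [Smap1_eq β hb]; ext x
  simp only [Set.mem_preimage, Set.mem_Icc, le_div_iff₀ hb, div_le_iff₀ hb]
  constructor <;> rintro ⟨u, v⟩ <;> constructor <;> linarith

lemma pre0_Iio (β : ℝ) (hb : (0:ℝ) < β) (a : ℝ) :
    (Smap β 0) ⁻¹' Set.Iio a = Set.Iio (a*β) := by
  rw [Smap0_eq]; ext x
  simp only [Set.mem_preimage, Set.mem_Iio, div_lt_iff₀ hb]

lemma pre1_Iio (β : ℝ) (hb : (0:ℝ) < β) (a : ℝ) :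
    (Smap β 1) ⁻¹' Set.Iio a = Set.Iio (a*β - (β-1)) := by
  rw [Smap1_eq β hb]; ext x
  simp only [Set.mem_preimage, Set.mem_Iio, div_lt_iff₀ hb]
  constructor <;> intro u <;> linarith

lemma pre0_Ioi (β : ℝ) (hb : (0:ℝ) < β) (a : ℝ) :
    (Smap β 0) ⁻¹' Set.Ioi a = Set.Ioi (a*β) := by
  rw [Smap0_eq]; ext x
  simp only [Set.mem_preimage, Set.mem_Ioi, lt_div_iff₀ hb]

lemma pre1_Ioi (β : ℝ) (hb : (0:ℝ) < β) (a : ℝ) :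
    (Smap β 1) ⁻¹' Set.Ioi a = Set.Ioi (a*β - (β-1)) := by
  rw [Smap1_eq β hb]; ext x
  simp only [Set.mem_preimage, Set.mem_Ioi, lt_div_iff₀ hb]
  constructor <;> intro u <;> linarith

lemma pre0_zero (β : ℝ) (hb : (0:ℝ) < β) :
    (Smap β 0) ⁻¹' {(0:ℝ)} = {(0:ℝ)} := by
  rw [Smap0_eq]; ext x
  simp only [Set.mem_preimage, Set.mem_singleton_iff, div_eq_zero_iff]
  constructor
  · rintro (h | h)
    · exact h
    · exact absurd h hb.ne'
  · exact fun h => Or.inl h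

lemma pre1_zero (β : ℝ) (hb : (0:ℝ) < β) :
    (Smap β 1) ⁻¹' {(0:ℝ)} = {1 - β} := by
  rw [Smap1_eq β hb]; ext x
  simp only [Set.mem_preimage, Set.mem_singleton_iff, div_eq_zero_iff]
  constructor
  · rintro (h | h)
    · linarith
    · exact absurd h hb.ne'
  · intro h
    left
    linarith

lemma mS0 (β : ℝ) : Measurable (Smap β 0) := by
  rw [Smap0_eq]; exact measurable_id.div_const β

lemma mS1 (β : ℝ) : Measurable (Smap β 1) := by
  have : Smap β 1 = fun x => x / β + (1 - 1/β) := by funext x; simp [Smap]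
  rw [this]; exact (measurable_id.div_const β).add_const _


set_option maxHeartbeats 1600000 in
/-- `μ_p([0, d_i]) = 1 - p₂^{m+1-i}/(1 - p₁·p₂^{m-1})` for `1 ≤ i ≤ m`. -/
theorem stmt_6 (m : ℕ) (hm : 2 ≤ m) (β : ℝ) (hβ1 : 1 < β) (hβ2 : β < 2)
    (hβ : β ^ m = ∑ j ∈ Finset.range m, β ^ j)
    (p1 p2 : ℝ) (hp1 : 0 < p1) (hp2 : 0 < p2) (hp : p1 + p2 = 1)
    (μ : Measure ℝ) [IsProbabilityMeasure μ]
    (hμ : μ = ENNReal.ofReal p1 • μ.map (Smap β 0) + ENNReal.ofReal p2 • μ.map (Smap β 1))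
    (i : ℕ) (hi1 : 1 ≤ i) (hi2 : i ≤ m) :
    μ (Set.Icc 0 (dd β i)) =
      ENNReal.ofReal (1 - p2 ^ (m + 1 - i) / (1 - p1 * p2 ^ (m - 1))) := by
  have hb0 : (0:ℝ) < β := by linarith
  have h2b : (0:ℝ) < 2 - β := by linarith
  -- algebraic facts about β
  have key : β ^ m * (2 - β) = 1 := by
    rw [geom_sum_eq (by linarith : β ≠ 1)] at hβ
    have h1 : β - 1 ≠ 0 := by linarith
    field_simp at hβ
    linarith
  have hφ : β + 1 ≤ β ^ 2 := by
    have h2 : β ^ 2 ≤ β ^ m := pow_le_pow_right₀ hβ1.le hm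
    nlinarith [sq_nonneg (β - 1)]
  have hbm1 : β ^ (m - 1) * (2 - β) = 1 / β := by
    have h3 : β * (β ^ (m - 1) * (2 - β)) = 1 := by
      rw [← mul_assoc, ← pow_succ', show m - 1 + 1 = m from by omega]
      exact key
    field_simp
    linarith
  -- the functional equation
  have feq : ∀ E : Set ℝ, MeasurableSet E →
      μ E = ENNReal.ofReal p1 * μ ((Smap β 0) ⁻¹' E)
        + ENNReal.ofReal p2 * μ ((Smap β 1) ⁻¹' E) := by
    intro E hE
    conv_lhs => rw [hμ]
    simp [Measure.add_apply, Measure.smul_apply, smul_eq_mul,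
      Measure.map_apply (mS0 β) hE, Measure.map_apply (mS1 β) hE]
  have toR : ∀ E : Set ℝ, MeasurableSet E →
      (μ E).toReal = p1 * (μ ((Smap β 0) ⁻¹' E)).toReal
        + p2 * (μ ((Smap β 1) ⁻¹' E)).toReal := by
    intro E hE
    rw [feq E hE,
      ENNReal.toReal_add (ENNReal.mul_ne_top ENNReal.ofReal_ne_top (measure_ne_top μ _))
        (ENNReal.mul_ne_top ENNReal.ofReal_ne_top (measure_ne_top μ _)),
      ENNReal.toReal_mul, ENNReal.toReal_mul, ENNReal.toReal_ofReal hp1.le,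
      ENNReal.toReal_ofReal hp2.le]
  have hPsum : ENNReal.ofReal p1 + ENNReal.ofReal p2 = 1 := by
    rw [← ENNReal.ofReal_add hp1.le hp2.le, hp, ENNReal.ofReal_one]
  -- μ vanishes on (-∞, t) for t < 0
  have step_neg : ∀ t : ℝ, t ≤ 0 → μ (Set.Iio t) ≤ μ (Set.Iio (t * β)) := by
    intro t ht
    calc μ (Set.Iio t)
        = ENNReal.ofReal p1 * μ (Set.Iio (t*β)) + ENNReal.ofReal p2 * μ (Set.Iio (t*β - (β-1))) := by
          rw [feq _ measurableSet_Iio, pre0_Iio β hb0, pre1_Iio β hb0]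
      _ ≤ ENNReal.ofReal p1 * μ (Set.Iio (t*β)) + ENNReal.ofReal p2 * μ (Set.Iio (t*β)) :=
          add_le_add_right (mul_le_mul_right
            (measure_mono (Set.Iio_subset_Iio (by linarith))) _) _
      _ = (ENNReal.ofReal p1 + ENNReal.ofReal p2) * μ (Set.Iio (t*β)) := (add_mul _ _ _).symm
      _ = μ (Set.Iio (t*β)) := by rw [hPsum, one_mul]
  have iter_neg : ∀ n : ℕ, ∀ t : ℝ, t ≤ 0 → μ (Set.Iio t) ≤ μ (Set.Iio (t * β ^ n)) := by
    intro n
    induction n with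
    | zero => intro t ht; simp
    | succ n ih =>
      intro t ht
      have h1 : t * β ^ n ≤ 0 := mul_nonpos_of_nonpos_of_nonneg ht (by positivity)
      calc μ (Set.Iio t) ≤ μ (Set.Iio (t * β ^ n)) := ih t ht
        _ ≤ μ (Set.Iio (t * β ^ n * β)) := step_neg _ h1
        _ = μ (Set.Iio (t * β ^ (n+1))) := by rw [pow_succ, mul_assoc]
  have vanish_neg : ∀ t : ℝ, t < 0 → μ (Set.Iio t) = 0 := by
    intro t ht
    have hAnt : Antitone (fun n : ℕ => Set.Iio (t * β ^ n)) := by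
      intro n k hnk
      exact Set.Iio_subset_Iio
        (mul_le_mul_of_nonpos_left (pow_le_pow_right₀ hβ1.le hnk) ht.le)
    have hempty : (⋂ n : ℕ, Set.Iio (t * β ^ n)) = ∅ := by
      rw [Set.eq_empty_iff_forall_notMem]
      intro x hx
      simp only [Set.mem_iInter, Set.mem_Iio] at hx
      obtain ⟨n, hn⟩ := pow_unbounded_of_one_lt (x / t) hβ1
      have : β ^ n * t < x := (div_lt_iff_of_neg ht).mp hn
      have := hx n
      nlinarith
    have htend := tendsto_measure_iInter_atTop (μ := μ)
      (fun n => measurableSet_Iio.nullMeasurableSet) hAnt ⟨0, measure_ne_top μ _⟩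
    rw [hempty, measure_empty] at htend
    have hle : μ (Set.Iio t) ≤ 0 :=
      ge_of_tendsto htend (Filter.Eventually.of_forall fun n => iter_neg n t ht.le)
    exact le_zero_iff.mp hle
  have hIio0 : μ (Set.Iio 0) = 0 := by
    have h := toR (Set.Iio 0) measurableSet_Iio
    rw [pre0_Iio β hb0, pre1_Iio β hb0] at h
    simp only [zero_mul, zero_sub] at h
    rw [vanish_neg (-(β-1)) (by linarith)] at h
    have h0 : μ (Set.Iio (0:ℝ)) ≠ ⊤ := measure_ne_top μ _
    set a := (μ (Set.Iio (0:ℝ))).toReal with ha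
    have han : 0 ≤ a := ENNReal.toReal_nonneg
    have : a = 0 := by
      simp only [ENNReal.toReal_zero, mul_zero, add_zero] at h
      have hap : a * p2 = 0 := by linear_combination a * hp + h
      exact (mul_eq_zero.mp hap).resolve_right hp2.ne'
    rw [← ENNReal.ofReal_toReal h0, ← ha, this, ENNReal.ofReal_zero]
  -- μ vanishes on (t, ∞) for t ≥ 1
  have step_pos : ∀ t : ℝ, 1 ≤ t → μ (Set.Ioi t) ≤ μ (Set.Ioi (t * β - (β - 1))) := by
    intro t ht
    calc μ (Set.Ioi t)
        = ENNReal.ofReal p1 * μ (Set.Ioi (t*β)) + ENNReal.ofReal p2 * μ (Set.Ioi (t*β - (β-1))) := by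
          rw [feq _ measurableSet_Ioi, pre0_Ioi β hb0, pre1_Ioi β hb0]
      _ ≤ ENNReal.ofReal p1 * μ (Set.Ioi (t*β - (β-1))) + ENNReal.ofReal p2 * μ (Set.Ioi (t*β - (β-1))) :=
          add_le_add_left (mul_le_mul_right
            (measure_mono (Set.Ioi_subset_Ioi (by linarith))) _) _
      _ = (ENNReal.ofReal p1 + ENNReal.ofReal p2) * μ (Set.Ioi (t*β - (β-1))) := (add_mul _ _ _).symm
      _ = μ (Set.Ioi (t*β - (β-1))) := by rw [hPsum, one_mul]
  have iter_pos : ∀ n : ℕ, ∀ t : ℝ, 1 ≤ t →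
      μ (Set.Ioi t) ≤ μ (Set.Ioi ((t - 1) * β ^ n + 1)) := by
    intro n
    induction n with
    | zero => intro t ht; simp
    | succ n ih =>
      intro t ht
      have h1 : (1:ℝ) ≤ (t - 1) * β ^ n + 1 := by nlinarith [pow_pos hb0 n]
      calc μ (Set.Ioi t) ≤ μ (Set.Ioi ((t - 1) * β ^ n + 1)) := ih t ht
        _ ≤ μ (Set.Ioi (((t - 1) * β ^ n + 1) * β - (β - 1))) := step_pos _ h1
        _ = μ (Set.Ioi ((t - 1) * β ^ (n+1) + 1)) := by rw [pow_succ]; ring_nf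
  have vanish_pos : ∀ t : ℝ, 1 < t → μ (Set.Ioi t) = 0 := by
    intro t ht
    have hAnt : Antitone (fun n : ℕ => Set.Ioi ((t - 1) * β ^ n + 1)) := by
      intro n k hnk
      refine Set.Ioi_subset_Ioi ?_
      have := pow_le_pow_right₀ hβ1.le hnk
      nlinarith
    have hempty : (⋂ n : ℕ, Set.Ioi ((t - 1) * β ^ n + 1)) = ∅ := by
      rw [Set.eq_empty_iff_forall_notMem]
      intro x hx
      simp only [Set.mem_iInter, Set.mem_Ioi] at hx
      obtain ⟨n, hn⟩ := pow_unbounded_of_one_lt ((x - 1) / (t - 1)) hβ1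
      have ht1 : (0:ℝ) < t - 1 := by linarith
      rw [div_lt_iff₀ ht1] at hn
      have := hx n
      nlinarith
    have htend := tendsto_measure_iInter_atTop (μ := μ)
      (fun n => measurableSet_Ioi.nullMeasurableSet) hAnt ⟨0, measure_ne_top μ _⟩
    rw [hempty, measure_empty] at htend
    have hle : μ (Set.Ioi t) ≤ 0 :=
      ge_of_tendsto htend (Filter.Eventually.of_forall fun n => iter_pos n t ht.le)
    exact le_zero_iff.mp hle
  have hIoi1 : μ (Set.Ioi 1) = 0 := by
    have h := toR (Set.Ioi 1) measurableSet_Ioi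
    rw [pre0_Ioi β hb0, pre1_Ioi β hb0] at h
    rw [vanish_pos (1*β) (by linarith)] at h
    have : (1:ℝ)*β - (β-1) = 1 := by ring
    rw [this] at h
    have h0 : μ (Set.Ioi (1:ℝ)) ≠ ⊤ := measure_ne_top μ _
    set a := (μ (Set.Ioi (1:ℝ))).toReal with ha
    have han : 0 ≤ a := ENNReal.toReal_nonneg
    have : a = 0 := by
      simp only [ENNReal.toReal_zero, mul_zero, zero_add] at h
      have hap : a * p1 = 0 := by linear_combination a * hp + h
      exact (mul_eq_zero.mp hap).resolve_right hp1.ne'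
    rw [← ENNReal.ofReal_toReal h0, ← ha, this, ENNReal.ofReal_zero]
  -- μ({0}) = 0
  have hzero : μ {(0:ℝ)} = 0 := by
    have h := toR {(0:ℝ)} (measurableSet_singleton 0)
    rw [pre0_zero β hb0, pre1_zero β hb0] at h
    have h1 : μ {1 - β} = 0 := by
      have : ({1 - β} : Set ℝ) ⊆ Set.Iio 0 := by
        intro x hx
        simp only [Set.mem_singleton_iff] at hx
        simp [hx, Set.mem_Iio]; linarith
      exact le_zero_iff.mp (hIio0 ▸ measure_mono this)
    rw [h1] at h
    have h0 : μ {(0:ℝ)} ≠ ⊤ := measure_ne_top μ _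
    set a := (μ {(0:ℝ)}).toReal with ha
    have han : 0 ≤ a := ENNReal.toReal_nonneg
    have : a = 0 := by
      simp only [ENNReal.toReal_zero, mul_zero, add_zero] at h
      have hap : a * p2 = 0 := by linear_combination a * hp + h
      exact (mul_eq_zero.mp hap).resolve_right hp2.ne'
    rw [← ENNReal.ofReal_toReal h0, ← ha, this, ENNReal.ofReal_zero]
  -- μ([0,1]) = 1 and consequences
  have hIcc01 : μ (Set.Icc 0 1) = 1 := by
    have hsub : (Set.univ : Set ℝ) ⊆ Set.Iio 0 ∪ (Set.Icc 0 1 ∪ Set.Ioi 1) := by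
      intro x _
      rcases lt_or_ge x 0 with h | h
      · exact Or.inl h
      rcases le_or_gt x 1 with h' | h'
      · exact Or.inr (Or.inl ⟨h, h'⟩)
      · exact Or.inr (Or.inr h')
    have h1 : (1:ENNReal) = μ Set.univ := (measure_univ).symm
    have h2 : μ Set.univ ≤ μ (Set.Iio 0) + (μ (Set.Icc 0 1) + μ (Set.Ioi 1)) :=
      le_trans (measure_mono hsub) (le_trans (measure_union_le _ _)
        (add_le_add_right (measure_union_le _ _) _))
    rw [hIio0, hIoi1, zero_add, add_zero] at h2
    exact le_antisymm prob_le_one (h1 ▸ h2)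
  have Fge1 : ∀ x : ℝ, 1 ≤ x → (μ (Set.Icc 0 x)).toReal = 1 := by
    intro x hx
    have hle : μ (Set.Icc 0 x) ≤ 1 := prob_le_one
    have hge : (1:ENNReal) ≤ μ (Set.Icc 0 x) := by
      rw [← hIcc01]
      exact measure_mono (Set.Icc_subset_Icc_right hx)
    rw [le_antisymm hle hge, ENNReal.toReal_one]
  have Fneg : ∀ y : ℝ, 0 ≤ y → μ (Set.Icc (0 - (β-1)) y) = μ (Set.Icc 0 y) := by
    intro y hy
    refine le_antisymm ?_ (measure_mono (Set.Icc_subset_Icc_left (by linarith)))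
    have hsub : Set.Icc (0 - (β-1)) y ⊆ Set.Iio 0 ∪ Set.Icc 0 y := by
      intro x hx
      rcases lt_or_ge x 0 with h | h
      · exact Or.inl h
      · exact Or.inr ⟨h, hx.2⟩
    calc μ (Set.Icc (0 - (β-1)) y) ≤ μ (Set.Iio 0) + μ (Set.Icc 0 y) :=
          le_trans (measure_mono hsub) (measure_union_le _ _)
      _ = μ (Set.Icc 0 y) := by rw [hIio0, zero_add]
  -- dd facts
  have dd_pos : ∀ j : ℕ, 1 ≤ j → j ≤ m → 0 ≤ dd β j ∧ dd β j ≤ 1 := by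
    intro j hj1 hj2
    obtain ⟨k, rfl⟩ : ∃ k, j = k + 1 := ⟨j - 1, by omega⟩
    rw [dd_formula]
    have h1 : β ^ k * (2-β) ≤ β ^ (m-1) * (2-β) :=
      mul_le_mul_of_nonneg_right (pow_le_pow_right₀ hβ1.le (by omega)) h2b.le
    rw [hbm1] at h1
    have h2 : (0:ℝ) < β ^ k * (2-β) := by positivity
    have h3 : 1/β < 1 := by rw [div_lt_one hb0]; linarith
    constructor <;> linarith
  -- the real-valued sequence
  set G : ℕ → ℝ := fun j => (μ (Set.Icc 0 (dd β j))).toReal with hG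
  -- recursion A
  have recA : ∀ j : ℕ, 1 ≤ j → j + 1 ≤ m → G j = p1 + p2 * G (j+1) := by
    intro j hj1 hj2
    have h := toR (Set.Icc 0 (dd β j)) measurableSet_Icc
    rw [pre0_Icc β hb0, pre1_Icc β hb0] at h
    simp only [zero_mul] at h
    -- first term: β * dd β j ≥ 1
    obtain ⟨k, rfl⟩ : ∃ k, j = k + 1 := ⟨j - 1, by omega⟩
    have hdj : dd β (k+1) = 1 - β ^ k * (2-β) := dd_formula β k
    have hik : β ^ (k+1) * (2-β) ≤ β ^ (m-1) * (2-β) :=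
      mul_le_mul_of_nonneg_right (pow_le_pow_right₀ hβ1.le (by omega)) h2b.le
    rw [hbm1] at hik
    have hinv : 1/β ≤ β - 1 := by
      rw [div_le_iff₀ hb0]; nlinarith
    have hbd : 1 ≤ dd β (k+1) * β := by
      rw [hdj]
      have : β ^ (k+1) = β ^ k * β := pow_succ β k
      nlinarith
    rw [Fge1 _ hbd] at h
    -- second term
    have hsucc : dd β (k+1) * β - (β - 1) = dd β (k+2) := by
      rw [show dd β (k+2) = β * dd β (k+1) - (β-1) from rfl]; ring
    have hd2 : 0 ≤ dd β (k+2) := (dd_pos (k+2) (by omega) (by omega)).1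
    rw [hsucc, Fneg _ hd2] at h
    simpa using h
  -- recursion B
  have recB : G m = p1 * G 1 := by
    have h := toR (Set.Icc 0 (dd β m)) measurableSet_Icc
    rw [pre0_Icc β hb0, pre1_Icc β hb0] at h
    simp only [zero_mul] at h
    have hdm : dd β m = 1 - β ^ (m-1) * (2-β) := by
      have h4 := dd_formula β (m-1)
      rw [show m - 1 + 1 = m from by omega] at h4
      exact h4
    rw [hbm1] at hdm
    have hd1 : dd β m * β = dd β 1 := by
      rw [hdm, show dd β 1 = β - 1 from rfl]
      field_simp
    have hd0 : dd β m * β - (β - 1) = 0 := by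
      rw [hd1, show dd β 1 = β - 1 from rfl]; ring
    rw [hd0, hd1] at h
    have hIcc00 : μ (Set.Icc (0 - (β-1)) (0:ℝ)) = 0 := by
      rw [Fneg 0 le_rfl, Set.Icc_self, hzero]
    rw [hIcc00] at h
    simpa using h
  -- solve the chain
  have chain : ∀ k : ℕ, k ≤ m - 1 → G (m - k) = (1 - p2 ^ k) + p2 ^ k * G m := by
    intro k
    induction k with
    | zero => intro _; simp
    | succ k ih =>
      intro hk
      have h1 : 1 ≤ m - (k+1) := by omega
      have h2 : (m - (k+1)) + 1 ≤ m := by omega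
      have h3 : m - (k+1) + 1 = m - k := by omega
      have := recA (m - (k+1)) h1 h2
      rw [h3, ih (by omega)] at this
      rw [this]
      linear_combination hp
  have hD : 0 < 1 - p1 * p2 ^ (m-1) := by
    have hp2lt : p2 < 1 := by linarith
    have h1 : p2 ^ (m-1) ≤ 1 := pow_le_one₀ hp2.le hp2lt.le
    nlinarith
  have hGm : G m = p1 * (1 - p2 ^ (m-1)) / (1 - p1 * p2 ^ (m-1)) := by
    have h1 : G 1 = (1 - p2 ^ (m-1)) + p2 ^ (m-1) * G m := by
      have := chain (m-1) le_rfl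
      rw [show m - (m-1) = 1 from by omega] at this
      exact this
    rw [h1] at recB
    field_simp
    linarith [recB]
  -- conclude
  have hGi : G i = 1 - p2 ^ (m + 1 - i) / (1 - p1 * p2 ^ (m-1)) := by
    have h1 := chain (m - i) (by omega)
    rw [show m - (m - i) = i from by omega, hGm] at h1
    rw [h1, show m + 1 - i = (m - i) + 1 from by omega, pow_succ]
    field_simp
    linear_combination (p2 ^ (m-i)) * hp
  have hfin := congrArg ENNReal.ofReal hGi
  rw [← ENNReal.ofReal_toReal (measure_ne_top μ (Set.Icc 0 (dd β i)))]
  exact hfin
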